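/- arXiv:2012.09730 — 2 statements merged into one kernel-verified Lean document; each statement's English description precedes it below -/
import Mathlib

section
/- Let Ω = ∏_{e} Ω_e be a finite product probability space with product measure μ, and let A, B be increasing events. Then the disjoint occurrence A ∘ B satisfies μ(A ∘ B) ≤ μ(A)·μ(B) (the BK inequality), where A ∘ B = {ω : ∃ S ⊆ index set with [ω]_S ⊆ A and [ω]_{S^c} ⊆ B} and [ω]_S = {ω' : ω'_i = ω_i for all i ∈ S}. -/
open MeasureTheory
open scoped ENNReal

/-- The disjoint occurrence `A ∘ B`: there is a set `S` of coordinates such that fixing the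
coordinates of `ω` on `S` forces `A` and fixing those off `S` forces `B`. -/
def disjOcc {ι : Type*} (A B : Set (ι → Bool)) : Set (ι → Bool) :=
  {ω | ∃ S : Set ι,
    {ω' | ∀ i ∈ S, ω' i = ω i} ⊆ A ∧ {ω' | ∀ i ∉ S, ω' i = ω i} ⊆ B}

namespace BKAux

/-- Increasing events. -/
def Incr {ι : Type*} (A : Set (ι → Bool)) : Prop :=
  ∀ ω ω' : ι → Bool, (∀ i, ω i ≤ ω' i) → ω ∈ A → ω' ∈ A

lemma measSet {α : Type*} [MeasurableSpace α] [MeasurableSingletonClass α] [Finite α]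
    (s : Set α) : MeasurableSet s :=
  (Set.toFinite s).measurableSet

lemma disjOcc_mono {ι : Type*} {A A' B B' : Set (ι → Bool)} (hA : A ⊆ A') (hB : B ⊆ B') :
    disjOcc A B ⊆ disjOcc A' B' := by
  rintro ω ⟨S, h1, h2⟩
  exact ⟨S, h1.trans hA, h2.trans hB⟩

lemma disjOcc_subset {ι : Type*} {A B : Set (ι → Bool)} : disjOcc A B ⊆ A ∩ B := by
  rintro ω ⟨S, h1, h2⟩
  exact ⟨h1 (fun i _ => rfl), h2 (fun i _ => rfl)⟩

/-- Slice of an event at the 0-th coordinate. -/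
def slice {n : ℕ} (A : Set (Fin (n + 1) → Bool)) (b : Bool) : Set (Fin n → Bool) :=
  {ω | Fin.cons b ω ∈ A}

lemma incr_slice {n : ℕ} {A : Set (Fin (n + 1) → Bool)} (hA : Incr A) (b : Bool) :
    Incr (slice A b) := by
  intro ω ω' h hω
  refine hA _ _ ?_ hω
  intro j
  induction j using Fin.cases with
  | zero => simp
  | succ i => simpa using h i

lemma slice_mono {n : ℕ} {A A' : Set (Fin (n + 1) → Bool)} (h : A ⊆ A') (b : Bool) :
    slice A b ⊆ slice A' b := fun _ hω => h hω

lemma slice_le {n : ℕ} {A : Set (Fin (n + 1) → Bool)} (hA : Incr A) :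
    slice A false ⊆ slice A true := by
  intro ω hω
  refine hA _ _ ?_ hω
  intro j
  induction j using Fin.cases with
  | zero => simp
  | succ i => simp

lemma slice_disjOcc_false {n : ℕ} {A B : Set (Fin (n + 1) → Bool)} :
    slice (disjOcc A B) false ⊆ disjOcc (slice A false) (slice B false) := by
  rintro ω ⟨S, h1, h2⟩
  refine ⟨{i : Fin n | i.succ ∈ S}, ?_, ?_⟩
  · intro ω' hω'
    refine h1 ?_
    intro j hj
    induction j using Fin.cases with
    | zero => simp
    | succ i => simpa using hω' i hj
  · intro ω' hω'
    refine h2 ?_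
    intro j hj
    induction j using Fin.cases with
    | zero => simp
    | succ i => simpa using hω' i hj

lemma slice_disjOcc_true {n : ℕ} {A B : Set (Fin (n + 1) → Bool)} :
    slice (disjOcc A B) true ⊆
      disjOcc (slice A true) (slice B false) ∪ disjOcc (slice A false) (slice B true) := by
  rintro ω ⟨S, h1, h2⟩
  by_cases h0 : (0 : Fin (n + 1)) ∈ S
  · left
    refine ⟨{i : Fin n | i.succ ∈ S}, ?_, ?_⟩
    · intro ω' hω'
      refine h1 ?_
      intro j hj
      induction j using Fin.cases with
      | zero => simp
      | succ i => simpa using hω' i hj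
    · intro ω' hω'
      refine h2 ?_
      intro j hj
      induction j using Fin.cases with
      | zero => exact absurd h0 hj
      | succ i => simpa using hω' i hj
  · right
    refine ⟨{i : Fin n | i.succ ∈ S}, ?_, ?_⟩
    · intro ω' hω'
      refine h1 ?_
      intro j hj
      induction j using Fin.cases with
      | zero => exact absurd hj h0
      | succ i => simpa using hω' i hj
    · intro ω' hω'
      refine h2 ?_
      intro j hj
      induction j using Fin.cases with
      | zero => simp
      | succ i => simpa using hω' i hj

/-- Decomposition of the product measure by the value of the first coordinate. -/
lemma pi_succ_apply {n : ℕ} (μ : Fin (n + 1) → Measure Bool)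
    [∀ i, IsProbabilityMeasure (μ i)] (C : Set (Fin (n + 1) → Bool)) :
    Measure.pi μ C =
      μ 0 {true} * Measure.pi (fun i => μ i.succ) (slice C true)
        + μ 0 {false} * Measure.pi (fun i => μ i.succ) (slice C false) := by
  classical
  set e := MeasurableEquiv.piFinSuccAbove (fun _ : Fin (n + 1) => Bool) 0 with he
  have hmp := measurePreserving_piFinSuccAbove μ 0
  have hsymm : MeasurePreserving e.symm
      ((μ 0).prod (Measure.pi fun j => μ ((0 : Fin (n + 1)).succAbove j))) (Measure.pi μ) :=
    hmp.symm e
  have h1 : Measure.pi μ C =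
      ((μ 0).prod (Measure.pi fun j => μ ((0 : Fin (n + 1)).succAbove j))) (e.symm ⁻¹' C) :=
    (hsymm.measure_preimage_equiv C).symm
  have hslice : ∀ b : Bool, (Prod.mk b ⁻¹' (e.symm ⁻¹' C)) = slice C b := by
    intro b
    ext x
    have : e.symm (b, x) = Fin.cons b x := by
      show (Fin.insertNthEquiv (fun _ => Bool) 0) (b, x) = Fin.cons b x
      simp [Fin.insertNth_zero', Fin.consEquiv]
    simp only [Set.mem_preimage, this]
    rfl
  rw [h1, Measure.prod_apply (measSet _), lintegral_fintype]
  simp only [hslice]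
  rw [Fintype.sum_bool]
  have hsucc : (fun j : Fin n => μ ((0 : Fin (n + 1)).succAbove j)) = fun j => μ j.succ := rfl
  rw [hsucc]
  ring

/-- The arithmetic core of the BK induction step. -/
lemma arith (p q f0 f1 a0 a1 b0 b1 g u v a10 a01 : ℝ)
    (hp : 0 ≤ p) (hq : 0 ≤ q) (hpq : p + q = 1)
    (hf0 : f0 ≤ g) (hg : g ≤ a0 * b0) (hgv : g ≤ v) (hf1 : f1 ≤ u)
    (huv : u + v = a10 + a01) (hu : u ≤ a1 * b1) (h10 : a10 ≤ a1 * b0) (h01 : a01 ≤ a0 * b1)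
    (ha : a0 ≤ a1) (hb : b0 ≤ b1)
    (hg0 : 0 ≤ g) (hu0 : 0 ≤ u) (hv0 : 0 ≤ v) :
    q * f0 + p * f1 ≤ (q * a0 + p * a1) * (q * b0 + p * b1) := by
  have hq' : q = 1 - p := by linarith
  subst hq'
  have hp1 : p ≤ 1 := by linarith
  have hprod : 0 ≤ (a1 - a0) * (b1 - b0) :=
    mul_nonneg (sub_nonneg.2 ha) (sub_nonneg.2 hb)
  rcases le_total p (1 - p) with hle | hle
  · -- p ≤ q
    have e1 : (1 - p) * f0 + p * f1 ≤ (1 - 2 * p) * g + p * (a10 + a01) := by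
      have h3 : p * u + p * v = p * a10 + p * a01 := by
        rw [← mul_add, ← mul_add, huv]
      have h4 : (1 - p) * f0 ≤ (1 - p) * g := mul_le_mul_of_nonneg_left hf0 hq
      have h5 : p * f1 ≤ p * u := mul_le_mul_of_nonneg_left hf1 hp
      have h6 : p * g ≤ p * v := mul_le_mul_of_nonneg_left hgv hp
      nlinarith
    have e2 : (1 - 2 * p) * g ≤ (1 - 2 * p) * (a0 * b0) :=
      mul_le_mul_of_nonneg_left hg (by linarith)
    have e3 : p * (a10 + a01) ≤ p * (a1 * b0 + a0 * b1) :=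
      mul_le_mul_of_nonneg_left (by linarith) hp
    have key : (1 - 2 * p) * (a0 * b0) + p * (a1 * b0 + a0 * b1)
        ≤ ((1 - p) * a0 + p * a1) * ((1 - p) * b0 + p * b1) := by
      nlinarith [mul_nonneg (mul_nonneg hp hp) hprod]
    linarith
  · -- q ≤ p
    have e1 : (1 - p) * f0 + p * f1 ≤ (1 - p) * v + p * u := by
      have h4 : (1 - p) * f0 ≤ (1 - p) * v := mul_le_mul_of_nonneg_left (hf0.trans hgv) hq
      have h5 : p * f1 ≤ p * u := mul_le_mul_of_nonneg_left hf1 hp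
      linarith
    have e2 : (1 - p) * v + p * u = (1 - p) * (a10 + a01) + (2 * p - 1) * u := by
      nlinarith [huv]
    have e3 : (1 - p) * (a10 + a01) ≤ (1 - p) * (a1 * b0 + a0 * b1) :=
      mul_le_mul_of_nonneg_left (by linarith) hq
    have e4 : (2 * p - 1) * u ≤ (2 * p - 1) * (a1 * b1) :=
      mul_le_mul_of_nonneg_left hu (by linarith)
    have key : (1 - p) * (a1 * b0 + a0 * b1) + (2 * p - 1) * (a1 * b1)
        ≤ ((1 - p) * a0 + p * a1) * ((1 - p) * b0 + p * b1) := by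
      nlinarith [mul_nonneg (mul_nonneg (sub_nonneg.2 hp1) (sub_nonneg.2 hp1)) hprod]
    linarith

lemma auxFin : ∀ (n : ℕ) (μ : Fin n → Measure Bool) [∀ i, IsProbabilityMeasure (μ i)]
    (A B : Set (Fin n → Bool)), Incr A → Incr B →
    Measure.pi μ (disjOcc A B) ≤ Measure.pi μ A * Measure.pi μ B := by
  intro n
  induction n with
  | zero =>
    intro μ _ A B _ _
    rcases Set.eq_empty_or_nonempty A with hAe | hAne
    · have : disjOcc A B = ∅ := by
        apply Set.eq_empty_of_subset_empty
        intro ω hω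
        exact absurd (disjOcc_subset hω).1 (by simp [hAe])
      simp [this]
    · have hAu : A = Set.univ := by
        apply Set.eq_univ_of_forall
        intro x
        obtain ⟨y, hy⟩ := hAne
        have : x = y := Subsingleton.elim x y
        rwa [this]
      have h1 : Measure.pi μ A = 1 := by rw [hAu]; simp
      rw [h1, one_mul]
      exact measure_mono (disjOcc_subset.trans Set.inter_subset_right)
  | succ n ih =>
    intro μ _ A B hA hB
    set m := Measure.pi (fun i : Fin n => μ i.succ) with hm
    haveI : ∀ i : Fin n, IsProbabilityMeasure (μ i.succ) := fun i => inferInstance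
    haveI : IsProbabilityMeasure m := by rw [hm]; infer_instance
    set A0 := slice A false; set A1 := slice A true
    set B0 := slice B false; set B1 := slice B true
    have hA0 : Incr A0 := incr_slice hA false
    have hA1 : Incr A1 := incr_slice hA true
    have hB0 : Incr B0 := incr_slice hB false
    have hB1 : Incr B1 := incr_slice hB true
    have hA01 : A0 ⊆ A1 := slice_le hA
    have hB01 : B0 ⊆ B1 := slice_le hB
    -- measure decompositions
    rw [pi_succ_apply μ (disjOcc A B), pi_succ_apply μ A, pi_succ_apply μ B]
    rw [← hm]
    set p := μ 0 {true} with hp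
    set q := μ 0 {false} with hq
    have hpq : p + q = 1 := by
      rw [hp, hq, ← measure_union (by simp) (by simp)]
      have : ({true} ∪ {false} : Set Bool) = Set.univ := by
        ext b; cases b <;> simp
      rw [this]
      exact measure_univ
    -- key set inclusions
    have hd0 : slice (disjOcc A B) false ⊆ disjOcc A0 B0 := slice_disjOcc_false
    have hd1 : slice (disjOcc A B) true ⊆ disjOcc A1 B0 ∪ disjOcc A0 B1 := slice_disjOcc_true
    have hsub : disjOcc A0 B0 ⊆ disjOcc A1 B0 ∩ disjOcc A0 B1 :=
      Set.subset_inter (disjOcc_mono hA01 subset_rfl) (disjOcc_mono subset_rfl hB01)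
    have hU : disjOcc A1 B0 ∪ disjOcc A0 B1 ⊆ disjOcc A1 B1 :=
      Set.union_subset (disjOcc_mono subset_rfl hB01) (disjOcc_mono hA01 subset_rfl)
    -- measures
    have hne : ∀ s : Set (Fin n → Bool), m s ≠ ⊤ := fun s => measure_ne_top m s
    have hpne : p ≠ ⊤ := measure_ne_top _ _
    have hqne : q ≠ ⊤ := measure_ne_top _ _
    -- induction hypothesis applications
    have ih00 : m (disjOcc A0 B0) ≤ m A0 * m B0 := ih _ A0 B0 hA0 hB0
    have ih10 : m (disjOcc A1 B0) ≤ m A1 * m B0 := ih _ A1 B0 hA1 hB0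
    have ih01 : m (disjOcc A0 B1) ≤ m A0 * m B1 := ih _ A0 B1 hA0 hB1
    have ih11 : m (disjOcc A1 B1) ≤ m A1 * m B1 := ih _ A1 B1 hA1 hB1
    have huv : m (disjOcc A1 B0 ∪ disjOcc A0 B1) + m (disjOcc A1 B0 ∩ disjOcc A0 B1)
        = m (disjOcc A1 B0) + m (disjOcc A0 B1) := measure_union_add_inter _ (measSet _)
    -- convert to reals
    have hfs : ∀ (x : ℝ≥0∞) (s : Set (Fin n → Bool)), x ≠ ⊤ → x * m s ≠ ⊤ :=
      fun x s hx => ENNReal.mul_ne_top hx (hne s)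
    have hfa : ∀ (s t : Set (Fin n → Bool)), p * m s + q * m t ≠ ⊤ :=
      fun s t => ENNReal.add_ne_top.2 ⟨hfs _ _ hpne, hfs _ _ hqne⟩
    have hsum : ∀ (s t : Set (Fin n → Bool)),
        (p * m s + q * m t).toReal = p.toReal * (m s).toReal + q.toReal * (m t).toReal := by
      intro s t
      rw [ENNReal.toReal_add (hfs _ _ hpne) (hfs _ _ hqne), ENNReal.toReal_mul,
        ENNReal.toReal_mul]
    rw [← ENNReal.toReal_le_toReal (hfa _ _)
      (ENNReal.mul_ne_top (hfa _ _) (hfa _ _))]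
    rw [ENNReal.toReal_mul, hsum, hsum, hsum]
    have hPQ : p.toReal + q.toReal = 1 := by
      rw [← ENNReal.toReal_add hpne hqne, hpq, ENNReal.toReal_one]
    have hmono : ∀ {s t : Set (Fin n → Bool)}, s ⊆ t → (m s).toReal ≤ (m t).toReal := by
      intro s t hst
      exact ENNReal.toReal_mono (hne t) (measure_mono hst)
    have htr : ∀ {x y : ℝ≥0∞}, x ≤ y → y ≠ ⊤ → x.toReal ≤ y.toReal := by
      intro x y h hy
      exact ENNReal.toReal_mono hy h
    have hUV : (m (disjOcc A1 B0 ∪ disjOcc A0 B1)).toReal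
        + (m (disjOcc A1 B0 ∩ disjOcc A0 B1)).toReal
        = (m (disjOcc A1 B0)).toReal + (m (disjOcc A0 B1)).toReal := by
      rw [← ENNReal.toReal_add (hne _) (hne _), ← ENNReal.toReal_add (hne _) (hne _), huv]
    have hmul : ∀ {x y z : ℝ≥0∞}, x ≤ y * z → y ≠ ⊤ → z ≠ ⊤ →
        x.toReal ≤ y.toReal * z.toReal := by
      intro x y z h hy hz
      calc x.toReal ≤ (y * z).toReal := htr h (ENNReal.mul_ne_top hy hz)
        _ = y.toReal * z.toReal := ENNReal.toReal_mul
    have key := arith p.toReal q.toReal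
      (m (slice (disjOcc A B) false)).toReal (m (slice (disjOcc A B) true)).toReal
      (m A0).toReal (m A1).toReal (m B0).toReal (m B1).toReal
      (m (disjOcc A0 B0)).toReal
      (m (disjOcc A1 B0 ∪ disjOcc A0 B1)).toReal
      (m (disjOcc A1 B0 ∩ disjOcc A0 B1)).toReal
      (m (disjOcc A1 B0)).toReal (m (disjOcc A0 B1)).toReal
      ENNReal.toReal_nonneg ENNReal.toReal_nonneg hPQ
      (hmono hd0) (hmul ih00 (hne _) (hne _))
      (hmono hsub) (hmono hd1) hUV
      ((hmono hU).trans (hmul ih11 (hne _) (hne _)))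
      (hmul ih10 (hne _) (hne _)) (hmul ih01 (hne _) (hne _))
      (hmono hA01) (hmono hB01)
      ENNReal.toReal_nonneg ENNReal.toReal_nonneg ENNReal.toReal_nonneg
    linarith

end BKAux

open BKAux in
/-- BK inequality: for a finite product of probability measures on `{0,1}`
coordinates and increasing events `A`, `B`, one has `μ(A ∘ B) ≤ μ(A)·μ(B)`. -/
theorem bk_inequality {ι : Type*} [Fintype ι] (μ : ι → Measure Bool)
    [∀ i, IsProbabilityMeasure (μ i)] (A B : Set (ι → Bool))
    (hA : ∀ ω ω' : ι → Bool, (∀ i, ω i ≤ ω' i) → ω ∈ A → ω' ∈ A)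
    (hB : ∀ ω ω' : ι → Bool, (∀ i, ω i ≤ ω' i) → ω ∈ B → ω' ∈ B) :
    Measure.pi μ (disjOcc A B) ≤ Measure.pi μ A * Measure.pi μ B := by
  classical
  set n := Fintype.card ι
  set e : ι ≃ Fin n := Fintype.equivFin ι with he
  set F := MeasurableEquiv.piCongrLeft (fun _ : ι => Bool) e.symm with hF
  have hmp : MeasurePreserving F (Measure.pi fun i' => μ (e.symm i')) (Measure.pi μ) :=
    measurePreserving_piCongrLeft μ e.symm
  haveI : ∀ i', IsProbabilityMeasure ((fun i' : Fin n => μ (e.symm i')) i') :=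
    fun i' => inferInstance
  have hFapp : ∀ (g : Fin n → Bool) (i : ι), F g i = g (e i) := by
    intro g i
    have := MeasurableEquiv.piCongrLeft_apply_apply e.symm (β := fun _ : ι => Bool) g (e i)
    simpa using this
  have hpre : ∀ s : Set (ι → Bool), Measure.pi μ s = (Measure.pi fun i' => μ (e.symm i')) (F ⁻¹' s) :=
    fun s => (hmp.measure_preimage_equiv s).symm
  have hsub : F ⁻¹' disjOcc A B ⊆ disjOcc (F ⁻¹' A) (F ⁻¹' B) := by
    rintro g ⟨S, h1, h2⟩
    refine ⟨{a : Fin n | e.symm a ∈ S}, ?_, ?_⟩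
    · intro g' hg'
      refine h1 ?_
      intro i hi
      rw [hFapp, hFapp]
      exact hg' (e i) (by simpa using hi)
    · intro g' hg'
      refine h2 ?_
      intro i hi
      rw [hFapp, hFapp]
      exact hg' (e i) (by simpa using hi)
  have hIA : Incr (F ⁻¹' A) := by
    intro g g' h hg
    refine hA _ _ ?_ hg
    intro i
    rw [hFapp, hFapp]
    exact h (e i)
  have hIB : Incr (F ⁻¹' B) := by
    intro g g' h hg
    refine hB _ _ ?_ hg
    intro i
    rw [hFapp, hFapp]
    exact h (e i)
  calc Measure.pi μ (disjOcc A B)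
      = (Measure.pi fun i' => μ (e.symm i')) (F ⁻¹' disjOcc A B) := hpre _
    _ ≤ (Measure.pi fun i' => μ (e.symm i')) (disjOcc (F ⁻¹' A) (F ⁻¹' B)) :=
        measure_mono hsub
    _ ≤ (Measure.pi fun i' => μ (e.symm i')) (F ⁻¹' A)
        * (Measure.pi fun i' => μ (e.symm i')) (F ⁻¹' B) :=
        auxFin n _ _ _ hIA hIB
    _ = Measure.pi μ A * Measure.pi μ B := by rw [← hpre, ← hpre]
end

section
/- For any ā > 0, α > 0, and d ∈ ℕ, there exists K₀ ∈ ℕ (depending only on ā, α, d) such that for all K ≥ K₀ and every graphon W with sup W ≤ ā, and every x ∈ [0,1], the branching process X^W started from type x satisfies P(all particles in the first d generations have at most K children | root type = x) > 1 - K^{-α}. -/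
open MeasureTheory

set_option maxHeartbeats 1000000



/-- The unit interval. -/
noncomputable def I01 : Set ℝ := Set.Icc 0 1

/-- `q_W(K, d, x)`: the probability, conditional on the root having type `x`, that every
particle in the first `d` generations of the branching process `X^W` has at most `K`
children. Recursively, `q(K,0,x) = P(Poisson(∫W(x,·)) ≤ K)` and
`q(K,d+1,x) = ∑_{j=0}^K e^{-∫W(x,·)}/j! (∫ W(x,y) q(K,d,y) dy)^j`. -/
noncomputable def qBP (W : ℝ → ℝ → ℝ) (K : ℕ) : ℕ → ℝ → ℝ
  | 0, x => ∑ j ∈ Finset.range (K + 1),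
      Real.exp (-(∫ y in I01, W x y)) * (∫ y in I01, W x y) ^ j / (Nat.factorial j)
  | d + 1, x => ∑ j ∈ Finset.range (K + 1),
      Real.exp (-(∫ y in I01, W x y)) / (Nat.factorial j) *
        (∫ y in I01, W x y * qBP W K d y) ^ j



lemma hasSum_exp (a : ℝ) : HasSum (fun n => a ^ n / n.factorial) (Real.exp a) := by
  rw [Real.exp_eq_exp_ℝ]; exact NormedSpace.expSeries_div_hasSum_exp a

lemma exp_tail {a : ℝ} (ha : 0 ≤ a) (K : ℕ) :
    Real.exp a - ∑ j ∈ Finset.range (K + 1), a ^ j / (j.factorial : ℝ)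
      ≤ a ^ (K + 1) / ((K + 1).factorial : ℝ) * Real.exp a := by
  have hs : Summable (fun n => a ^ n / (n.factorial : ℝ)) := (hasSum_exp a).summable
  have htsum : ∑' n, a ^ n / (n.factorial : ℝ) = Real.exp a := (hasSum_exp a).tsum_eq
  have hsplit := Summable.sum_add_tsum_nat_add (f := fun n => a ^ n / (n.factorial : ℝ)) (K + 1) hs
  rw [htsum] at hsplit
  have hs2 : Summable (fun n => a ^ (n + (K + 1)) / ((n + (K + 1)).factorial : ℝ)) :=
    (summable_nat_add_iff (K + 1)).2 hs
  have hs3 : Summable (fun n : ℕ =>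
      a ^ (K + 1) / ((K + 1).factorial : ℝ) * (a ^ n / (n.factorial : ℝ))) := hs.mul_left _
  have hterm : ∀ n : ℕ, a ^ (n + (K + 1)) / ((n + (K + 1)).factorial : ℝ)
      ≤ a ^ (K + 1) / ((K + 1).factorial : ℝ) * (a ^ n / (n.factorial : ℝ)) := by
    intro n
    have heq : a ^ (K + 1) / ((K + 1).factorial : ℝ) * (a ^ n / (n.factorial : ℝ))
        = a ^ (n + (K + 1)) / (((K + 1).factorial : ℝ) * (n.factorial : ℝ)) := by
      rw [div_mul_div_comm, ← pow_add, add_comm (K + 1) n]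
    rw [heq]
    have hfle : ((K + 1).factorial : ℝ) * (n.factorial : ℝ) ≤ ((n + (K + 1)).factorial : ℝ) := by
      have h := Nat.le_of_dvd (Nat.factorial_pos _)
        (Nat.factorial_mul_factorial_dvd_factorial_add (K + 1) n)
      rw [add_comm (K + 1) n] at h
      exact_mod_cast h
    have hpos : (0:ℝ) < ((K + 1).factorial : ℝ) * (n.factorial : ℝ) := by positivity
    gcongr
  have hsum_le := Summable.tsum_le_tsum hterm hs2 hs3
  rw [tsum_mul_left, htsum] at hsum_le
  linarith

lemma poisson_cdf_ge {a : ℝ} (ha : 0 ≤ a) (K : ℕ) :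
    1 - a ^ (K + 1) / ((K + 1).factorial : ℝ)
      ≤ ∑ j ∈ Finset.range (K + 1), Real.exp (-a) * a ^ j / (j.factorial : ℝ) := by
  have h := exp_tail ha K
  have hexp : (0:ℝ) < Real.exp (-a) := Real.exp_pos _
  have key := mul_le_mul_of_nonneg_left h hexp.le
  have hee : Real.exp (-a) * Real.exp a = 1 := by rw [← Real.exp_add]; simp
  rw [mul_sub] at key
  have h1 : Real.exp (-a) * (a ^ (K + 1) / ((K + 1).factorial : ℝ) * Real.exp a)
      ≤ a ^ (K + 1) / ((K + 1).factorial : ℝ) := by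
    rw [mul_comm (a ^ (K + 1) / _) (Real.exp a), ← mul_assoc, hee, one_mul]
  have h2 : Real.exp (-a) * ∑ j ∈ Finset.range (K + 1), a ^ j / (j.factorial : ℝ)
      = ∑ j ∈ Finset.range (K + 1), Real.exp (-a) * a ^ j / (j.factorial : ℝ) := by
    rw [Finset.mul_sum]; exact Finset.sum_congr rfl fun j _ => by ring
  rw [hee, h2] at key
  linarith

lemma pow_sub_pow_le' {a m : ℝ} (hm0 : 0 ≤ m) (hma : m ≤ a) (n : ℕ) :
    a ^ (n + 1) - m ^ (n + 1) ≤ (a - m) * ((n + 1) * a ^ n) := by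
  induction n with
  | zero => simp
  | succ k ih =>
    have ha : 0 ≤ a := hm0.trans hma
    have h1 : a ^ (k + 2) - m ^ (k + 2) = a * (a ^ (k + 1) - m ^ (k + 1)) + (a - m) * m ^ (k + 1) := by
      ring
    have h2 : a * (a ^ (k + 1) - m ^ (k + 1)) ≤ a * ((a - m) * ((k + 1) * a ^ k)) :=
      mul_le_mul_of_nonneg_left ih ha
    have h3 : (a - m) * m ^ (k + 1) ≤ (a - m) * a ^ (k + 1) := by
      apply mul_le_mul_of_nonneg_left _ (by linarith)
      exact pow_le_pow_left₀ hm0 hma _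
    have h4 : a * ((a - m) * ((k + 1) * a ^ k)) = (a - m) * ((k + 1) * a ^ (k + 1)) := by ring
    have hcast : ((k + 1 + 1 : ℕ) : ℝ) = (k + 1 : ℕ) + 1 := by push_cast; ring
    push_cast
    push_cast at h2 h3 h4 ⊢
    nlinarith [pow_nonneg ha (k+1)]

lemma poisson_cdf_pert {a m : ℝ} (hm0 : 0 ≤ m) (hma : m ≤ a) (K : ℕ) :
    ∑ j ∈ Finset.range (K + 1), Real.exp (-a) * a ^ j / (j.factorial : ℝ) - (a - m)
      ≤ ∑ j ∈ Finset.range (K + 1), Real.exp (-a) / (j.factorial : ℝ) * m ^ j := by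
  have ha : 0 ≤ a := hm0.trans hma
  have hexp : (0:ℝ) < Real.exp (-a) := Real.exp_pos _
  have hdiff : ∑ j ∈ Finset.range (K + 1), Real.exp (-a) * a ^ j / (j.factorial : ℝ)
      - ∑ j ∈ Finset.range (K + 1), Real.exp (-a) / (j.factorial : ℝ) * m ^ j
      = ∑ j ∈ Finset.range (K + 1), Real.exp (-a) / (j.factorial : ℝ) * (a ^ j - m ^ j) := by
    rw [← Finset.sum_sub_distrib]
    exact Finset.sum_congr rfl fun j _ => by ring
  have hbound : ∑ j ∈ Finset.range (K + 1), Real.exp (-a) / (j.factorial : ℝ) * (a ^ j - m ^ j)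
      ≤ a - m := by
    rw [Finset.sum_range_succ']
    simp only [pow_zero, sub_self, mul_zero, add_zero]
    have hstep : ∀ i ∈ Finset.range K,
        Real.exp (-a) / ((i + 1).factorial : ℝ) * (a ^ (i + 1) - m ^ (i + 1))
        ≤ (a - m) * (Real.exp (-a) * (a ^ i / (i.factorial : ℝ))) := by
      intro i _
      have h1 := pow_sub_pow_le' hm0 hma i
      have hfac : ((i + 1).factorial : ℝ) = (i + 1) * (i.factorial : ℝ) := by
        rw [Nat.factorial_succ]; push_cast; ring
      have hfpos : (0:ℝ) < (i.factorial : ℝ) := by exact_mod_cast i.factorial_pos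
      rw [hfac]
      rw [div_mul_eq_mul_div, div_le_iff₀ (by positivity)]
      have expand : (a - m) * (Real.exp (-a) * (a ^ i / (i.factorial : ℝ))) *
          (((i:ℝ) + 1) * (i.factorial : ℝ)) = Real.exp (-a) * ((a - m) * (((i:ℝ) + 1) * a ^ i)) := by
        field_simp
      rw [expand]
      apply mul_le_mul_of_nonneg_left _ hexp.le
      calc a ^ (i + 1) - m ^ (i + 1) ≤ (a - m) * (((i:ℕ) + 1) * a ^ i) := h1
        _ = (a - m) * (((i:ℝ) + 1) * a ^ i) := by push_cast; ring
    calc ∑ i ∈ Finset.range K, Real.exp (-a) / ((i + 1).factorial : ℝ) * (a ^ (i + 1) - m ^ (i + 1))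
        ≤ ∑ i ∈ Finset.range K, (a - m) * (Real.exp (-a) * (a ^ i / (i.factorial : ℝ))) :=
          Finset.sum_le_sum hstep
      _ = (a - m) * (Real.exp (-a) * ∑ i ∈ Finset.range K, a ^ i / (i.factorial : ℝ)) := by
          rw [← Finset.mul_sum, ← Finset.mul_sum]
      _ ≤ (a - m) * (Real.exp (-a) * Real.exp a) := by
          apply mul_le_mul_of_nonneg_left _ (by linarith)
          exact mul_le_mul_of_nonneg_left (Real.sum_le_exp_of_nonneg ha K) hexp.le
      _ = a - m := by rw [← Real.exp_add]; simp
  linarith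
lemma vol_I01 : volume I01 = 1 := by simp [I01]

lemma measurableSet_I01 : MeasurableSet I01 := measurableSet_Icc

lemma integrableOn_of_bdd {f : ℝ → ℝ} {C : ℝ} (hf : Measurable f) (hb : ∀ y, |f y| ≤ C) :
    IntegrableOn f I01 := by
  have : IsFiniteMeasure (volume.restrict I01) :=
    ⟨by rw [Measure.restrict_apply_univ, vol_I01]; exact ENNReal.one_lt_top⟩
  exact Integrable.mono' (integrable_const C) hf.aestronglyMeasurable
    (Filter.Eventually.of_forall fun y => hb y)

variable {W : ℝ → ℝ → ℝ} {abar : ℝ} {K : ℕ}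

lemma measurable_qBP (hW : Measurable (Function.uncurry W)) (K : ℕ) :
    ∀ d, Measurable (qBP W K d) := by
  have hF : Measurable fun x => ∫ y in I01, W x y :=
    (MeasureTheory.StronglyMeasurable.integral_prod_right hW.stronglyMeasurable).measurable
  intro d
  induction d with
  | zero =>
    simp only [qBP]
    exact Finset.measurable_sum _ fun j _ =>
      (((Real.measurable_exp.comp hF.neg).mul (hF.pow_const j)).div_const _)
  | succ d ih =>
    simp only [qBP]
    have hG : Measurable fun x => ∫ y in I01, W x y * qBP W K d y := by
      have huncurry : Measurable (Function.uncurry fun x y => W x y * qBP W K d y) :=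
        hW.mul (ih.comp measurable_snd)
      exact (MeasureTheory.StronglyMeasurable.integral_prod_right
        huncurry.stronglyMeasurable).measurable
    exact Finset.measurable_sum _ fun j _ =>
      ((Real.measurable_exp.comp hF.neg).div_const _).mul (hG.pow_const j)

lemma S'_le_one {a m : ℝ} (hm0 : 0 ≤ m) (hma : m ≤ a) (n : ℕ) :
    ∑ j ∈ Finset.range n, Real.exp (-a) / (j.factorial : ℝ) * m ^ j ≤ 1 := by
  have h1 : ∑ j ∈ Finset.range n, Real.exp (-a) / (j.factorial : ℝ) * m ^ j
      = Real.exp (-a) * ∑ j ∈ Finset.range n, m ^ j / (j.factorial : ℝ) := by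
    rw [Finset.mul_sum]; exact Finset.sum_congr rfl fun j _ => by ring
  rw [h1]
  calc Real.exp (-a) * ∑ j ∈ Finset.range n, m ^ j / (j.factorial : ℝ)
      ≤ Real.exp (-a) * Real.exp m :=
        mul_le_mul_of_nonneg_left (Real.sum_le_exp_of_nonneg hm0 n) (Real.exp_pos _).le
    _ = Real.exp (m - a) := by rw [← Real.exp_add]; ring_nf
    _ ≤ 1 := Real.exp_le_one_iff.mpr (by linarith)

section Bounds

variable (hW : Measurable (Function.uncurry W)) (h0 : ∀ x y, 0 ≤ W x y)
  (hb : ∀ x y, W x y ≤ abar)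

include hW h0 hb

lemma intW (x : ℝ) : IntegrableOn (W x) I01 :=
  integrableOn_of_bdd (hW.comp measurable_prodMk_left)
    (fun y => abs_le.2 ⟨by linarith [h0 x y, hb x y], hb x y⟩)

lemma intA_nonneg (x : ℝ) : 0 ≤ ∫ y in I01, W x y :=
  setIntegral_nonneg measurableSet_I01 fun y _ => h0 x y

lemma intA_le (x : ℝ) : ∫ y in I01, W x y ≤ abar := by
  have h := setIntegral_mono_on (intW hW h0 hb x) (integrableOn_const (by rw [vol_I01]; exact ENNReal.one_ne_top))
    measurableSet_I01 (fun y _ => hb x y)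
  rwa [setIntegral_const, measureReal_def, vol_I01, ENNReal.toReal_one, one_smul] at h

lemma qBP_bounds (K : ℕ) : ∀ d x, 0 ≤ qBP W K d x ∧ qBP W K d x ≤ 1 := by
  intro d
  induction d with
  | zero =>
    intro x
    set a := ∫ y in I01, W x y with ha
    have ha0 : 0 ≤ a := intA_nonneg hW h0 hb x
    constructor
    · simp only [qBP]
      apply Finset.sum_nonneg; intro j _; positivity
    · simp only [qBP]
      have : ∑ j ∈ Finset.range (K + 1), Real.exp (-a) * a ^ j / (j.factorial : ℝ)
          = ∑ j ∈ Finset.range (K + 1), Real.exp (-a) / (j.factorial : ℝ) * a ^ j :=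
        Finset.sum_congr rfl fun j _ => by ring
      rw [this]
      exact S'_le_one ha0 le_rfl _
  | succ d ih =>
    intro x
    set a := ∫ y in I01, W x y with ha
    have ha0 : 0 ≤ a := intA_nonneg hW h0 hb x
    have hq := measurable_qBP hW K d
    have hintWq : IntegrableOn (fun y => W x y * qBP W K d y) I01 := by
      apply integrableOn_of_bdd (f := fun y => W x y * qBP W K d y) ((hW.comp measurable_prodMk_left).mul hq)
      intro y
      show |W x y * qBP W K d y| ≤ abar
      rw [abs_mul]
      calc |W x y| * |qBP W K d y| ≤ abar * 1 := by
            apply mul_le_mul (abs_le.2 ⟨by linarith [h0 x y, hb x y], hb x y⟩)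
              (abs_le.2 ⟨by linarith [(ih y).1], (ih y).2⟩) (abs_nonneg _)
              (by linarith [h0 x y, hb x y])
        _ = abar := mul_one _
    set m := ∫ y in I01, W x y * qBP W K d y with hm
    have hm0 : 0 ≤ m :=
      setIntegral_nonneg measurableSet_I01 fun y _ => mul_nonneg (h0 x y) (ih y).1
    have hma : m ≤ a :=
      setIntegral_mono_on hintWq (intW hW h0 hb x) measurableSet_I01
        (fun y _ => by nlinarith [(ih y).1, (ih y).2, h0 x y])
    constructor
    · simp only [qBP]
      apply Finset.sum_nonneg; intro j _; positivity
    · simp only [qBP]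
      exact S'_le_one hm0 hma _

end Bounds

noncomputable def Bp (a : ℝ) : ℕ → ℝ
  | 0 => 1
  | d + 1 => 1 + a * Bp a d

lemma Bp_nonneg {a : ℝ} (ha : 0 ≤ a) : ∀ d, 0 ≤ Bp a d := by
  intro d; induction d with
  | zero => norm_num [Bp]
  | succ d ih => simp only [Bp]; positivity

lemma eventually_small {abar α : ℝ} (habar : 0 < abar) (hα : 0 < α)
    {C : ℝ} (hC : 0 ≤ C) :
    ∃ K₀ : ℕ, 1 ≤ K₀ ∧ ∀ K : ℕ, K₀ ≤ K →
      C * (abar ^ (K + 1) / ((K + 1).factorial : ℝ)) < (K : ℝ) ^ (-α) := by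
  set b := abar * Real.exp α with hbdef
  have hg : Filter.Tendsto (fun K : ℕ => C * abar * (b ^ K / (K.factorial : ℝ)))
      Filter.atTop (nhds 0) := by
    have := ((Real.summable_pow_div_factorial b).mul_left (C * abar)).tendsto_atTop_zero
    exact this
  have hev : ∀ᶠ K in Filter.atTop, C * abar * (b ^ K / (K.factorial : ℝ)) < 1 :=
    hg.eventually_lt_const one_pos
  obtain ⟨K₁, hK₁⟩ := Filter.eventually_atTop.1 hev
  refine ⟨max K₁ 1, le_max_right _ _, ?_⟩
  intro K hK
  have hK1 : 1 ≤ K := le_trans (le_max_right _ _) hK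
  have hKpos : (0:ℝ) < (K : ℝ) := by exact_mod_cast hK1
  have hXnn : 0 ≤ C * (abar ^ (K + 1) / ((K + 1).factorial : ℝ)) := by positivity
  have hrpow : ((K:ℝ) ^ α) * ((K:ℝ) ^ (-α)) = 1 := by
    rw [← Real.rpow_add hKpos]; simp
  have hrpos : (0:ℝ) < (K:ℝ) ^ (-α) := Real.rpow_pos_of_pos hKpos _
  have hrpos' : (0:ℝ) < (K:ℝ) ^ α := Real.rpow_pos_of_pos hKpos _
  -- key: X * K^α < 1
  have hKα : (K:ℝ) ^ α ≤ Real.exp α ^ K := by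
    rw [Real.rpow_def_of_pos hKpos, ← Real.exp_nat_mul]
    apply Real.exp_le_exp.2
    have hlog : Real.log (K:ℝ) ≤ (K:ℝ) := Real.log_le_self hKpos.le
    exact mul_le_mul_of_nonneg_right hlog hα.le
  have hfacle : (K.factorial : ℝ) ≤ ((K + 1).factorial : ℝ) := by
    exact_mod_cast Nat.factorial_le (Nat.le_succ K)
  have hfacpos : (0:ℝ) < (K.factorial : ℝ) := by positivity
  have hkey : C * (abar ^ (K + 1) / ((K + 1).factorial : ℝ)) * ((K:ℝ) ^ α)
      ≤ C * abar * (b ^ K / (K.factorial : ℝ)) := by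
    have h1 : C * (abar ^ (K + 1) / ((K + 1).factorial : ℝ)) * ((K:ℝ) ^ α)
        = C * abar * (abar ^ K * (K:ℝ) ^ α) / (((K + 1).factorial : ℝ)) := by
      rw [pow_succ]; field_simp
    have h2 : C * abar * (b ^ K / (K.factorial : ℝ))
        = C * abar * (abar ^ K * Real.exp α ^ K) / (K.factorial : ℝ) := by
      rw [hbdef, mul_pow]; ring
    rw [h1, h2]
    apply div_le_div₀ (by positivity) _ hfacpos hfacle
    have := mul_le_mul_of_nonneg_left hKα (by positivity : (0:ℝ) ≤ abar ^ K)
    nlinarith [mul_nonneg (mul_nonneg hC habar.le) (mul_nonneg (pow_nonneg habar.le K) hrpos'.le)]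
  have hlt1 : C * (abar ^ (K + 1) / ((K + 1).factorial : ℝ)) * ((K:ℝ) ^ α) < 1 :=
    lt_of_le_of_lt hkey (hK₁ K (le_trans (le_max_left _ _) hK))
  calc C * (abar ^ (K + 1) / ((K + 1).factorial : ℝ))
      = C * (abar ^ (K + 1) / ((K + 1).factorial : ℝ)) * ((K:ℝ) ^ α) * ((K:ℝ) ^ (-α)) := by
        rw [mul_assoc, hrpow, mul_one]
    _ < 1 * ((K:ℝ) ^ (-α)) := by
        apply mul_lt_mul_of_pos_right hlt1 hrpos
    _ = (K : ℝ) ^ (-α) := one_mul _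

lemma intWq {W : ℝ → ℝ → ℝ} {abar : ℝ} (hW : Measurable (Function.uncurry W))
    (h0 : ∀ x y, 0 ≤ W x y) (hb : ∀ x y, W x y ≤ abar) {g : ℝ → ℝ} (hg : Measurable g)
    (hg01 : ∀ y, 0 ≤ g y ∧ g y ≤ 1) (x : ℝ) :
    IntegrableOn (fun y => W x y * g y) I01 := by
  apply integrableOn_of_bdd (f := fun y => W x y * g y) ((hW.comp measurable_prodMk_left).mul hg)
  intro y
  show |W x y * g y| ≤ abar
  rw [abs_mul]
  calc |W x y| * |g y| ≤ abar * 1 := by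
        apply mul_le_mul (abs_le.2 ⟨by linarith [h0 x y, hb x y], hb x y⟩)
          (abs_le.2 ⟨by linarith [(hg01 y).1], (hg01 y).2⟩) (abs_nonneg _)
          (by linarith [h0 x y, hb x y])
    _ = abar := mul_one _

lemma qBP_ge {W : ℝ → ℝ → ℝ} {abar : ℝ} (hW : Measurable (Function.uncurry W))
    (h0 : ∀ x y, 0 ≤ W x y) (hb : ∀ x y, W x y ≤ abar) (habar : 0 < abar) (K : ℕ) :
    ∀ d x, 1 - Bp abar d * (abar ^ (K + 1) / ((K + 1).factorial : ℝ)) ≤ qBP W K d x := by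
  set T := abar ^ (K + 1) / ((K + 1).factorial : ℝ) with hT
  have hT0 : 0 ≤ T := by positivity
  intro d
  induction d with
  | zero =>
    intro x
    set a := ∫ y in I01, W x y with ha
    have ha0 : 0 ≤ a := intA_nonneg hW h0 hb x
    have hale : a ≤ abar := intA_le hW h0 hb x
    have h1 := poisson_cdf_ge ha0 K
    have h2 : a ^ (K + 1) / (((K + 1).factorial : ℕ) : ℝ) ≤ T := by
      rw [hT]; gcongr
    simp only [qBP, Bp, one_mul]
    refine le_trans ?_ h1
    linarith
  | succ d ih =>
    intro x
    set a := ∫ y in I01, W x y with ha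
    have ha0 : 0 ≤ a := intA_nonneg hW h0 hb x
    have hale : a ≤ abar := intA_le hW h0 hb x
    have hq := measurable_qBP hW K d
    have hbounds := qBP_bounds hW h0 hb K d
    have hintWq : IntegrableOn (fun y => W x y * qBP W K d y) I01 :=
      intWq hW h0 hb hq hbounds x
    set m := ∫ y in I01, W x y * qBP W K d y with hm
    have hm0 : 0 ≤ m :=
      setIntegral_nonneg measurableSet_I01 fun y _ => mul_nonneg (h0 x y) (hbounds y).1
    have hma : m ≤ a :=
      setIntegral_mono_on hintWq (intW hW h0 hb x) measurableSet_I01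
        (fun y _ => by nlinarith [(hbounds y).1, (hbounds y).2, h0 x y])
    have pert := poisson_cdf_pert hm0 hma K
    have cdf := poisson_cdf_ge ha0 K
    have h2 : a ^ (K + 1) / (((K + 1).factorial : ℕ) : ℝ) ≤ T := by
      rw [hT]; gcongr
    have ham : a - m ≤ abar * (Bp abar d * T) := by
      have heq : a - m = ∫ y in I01, (W x y - W x y * qBP W K d y) :=
        (integral_sub (intW hW h0 hb x) hintWq).symm
      have hconst : IntegrableOn (fun _ : ℝ => abar * (Bp abar d * T)) I01 :=
        integrableOn_const (by rw [vol_I01]; exact ENNReal.one_ne_top)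
      have hmono := setIntegral_mono_on ((intW hW h0 hb x).sub hintWq) hconst
        measurableSet_I01 (fun y _ => by
          have hqy := hbounds y
          have hihy := ih y
          have h1' : (W x - fun y => W x y * qBP W K d y) y = W x y * (1 - qBP W K d y) := by
            simp only [Pi.sub_apply]; ring
          rw [h1']
          have h2' : W x y * (1 - qBP W K d y) ≤ abar * (1 - qBP W K d y) :=
            mul_le_mul_of_nonneg_right (hb x y) (by linarith [hqy.2])
          have h3' : abar * (1 - qBP W K d y) ≤ abar * (Bp abar d * T) :=
            mul_le_mul_of_nonneg_left (by linarith [hihy]) habar.le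
          linarith)
      rw [setIntegral_const, measureReal_def, vol_I01, ENNReal.toReal_one, one_smul] at hmono
      linarith [heq ▸ hmono]
    have hgoal : 1 - Bp abar (d + 1) * T = 1 - T - abar * (Bp abar d * T) := by
      simp only [Bp]; ring
    simp only [qBP]
    rw [← hm, ← ha, hgoal]
    linarith

/-- for any `ā > 0`, `α > 0`, `d`, there is `K₀` (depending only on `ā, α, d`)
such that for all `K ≥ K₀`, every graphon `W ≤ ā` and every `x ∈ [0,1]`,
`P(all particles in the first d generations have ≤ K children | root type x) > 1 - K^{-α}`. -/
theorem branching_tightness (abar α : ℝ) (habar : 0 < abar) (hα : 0 < α) (d : ℕ) :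
    ∃ K₀ : ℕ, ∀ K : ℕ, K₀ ≤ K →
      ∀ W : ℝ → ℝ → ℝ, Measurable (Function.uncurry W) →
        (∀ x y, 0 ≤ W x y) → (∀ x y, W x y ≤ abar) →
        ∀ x ∈ I01, qBP W K d x > 1 - (K : ℝ) ^ (-α) := by
  obtain ⟨K₀, hK₀1, hK₀⟩ := eventually_small habar hα (Bp_nonneg habar.le d)
  refine ⟨K₀, fun K hK W hW h0 hb x _ => ?_⟩
  have h1 := qBP_ge hW h0 hb habar K d x
  have h2 := hK₀ K hK
  linarith
end
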